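/- Let a = [[2,1],[3,2]] and, for s ≥ 10, b = [[2e^{−s}, 3e^{s}],[e^{−s}, 2e^{s}]] in SL₂(ℝ). Then a and b are hyperbolic elements whose translation axes in the hyperbolic plane are disjoint, and τ_b − τ_a ≥ 2d + 1 where d is the distance between the axes and τ denotes translation length. -/

import Mathlib

open Matrix UpperHalfPlane
open scoped MatrixGroups

/-- The translation length of `g ∈ SL(2,ℝ)` acting on the hyperbolic plane:
the infimum of the displacement `dist (g • z) z`. -/
noncomputable def transLen (g : SL(2, ℝ)) : ℝ := ⨅ z : ℍ, dist (g • z) z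

/-- The translation axis of `g`: the set of points realizing the minimal displacement. -/
noncomputable def axisSet (g : SL(2, ℝ)) : Set ℍ := {z : ℍ | dist (g • z) z = transLen g}

/-- The distance between the translation axes of `a` and `b`. -/
noncomputable def axisDist (a b : SL(2, ℝ)) : ℝ :=
  ⨅ (x : axisSet a) (y : axisSet b), dist (x : ℍ) (y : ℍ)

/-- `g` is a hyperbolic isometry iff `|tr g| > 2`. -/
def IsHyperbolic (g : SL(2, ℝ)) : Prop := 2 < |Matrix.trace (g : Matrix (Fin 2) (Fin 2) ℝ)|

/-- Determinant of two vectors in the plane. -/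
def det2 (u v : Fin 2 → ℝ) : ℝ := u 0 * v 1 - u 1 * v 0

/-- Positive cyclic orientation of three points of the circle `ℙ¹(ℝ) = ∂ℍ`, represented by
nonzero vectors of `ℝ²`; this is independent of the choice of representatives. -/
def posOrient (u v w : Fin 2 → ℝ) : Prop := 0 < det2 u v * det2 v w * det2 w u

/-- Four points of the circle `ℙ¹(ℝ)`, given by vector representatives, are cyclically
ordered in the order `(u, v, w, z)` (for one of the two orientations). -/
def cyc4 (u v w z : Fin 2 → ℝ) : Prop :=
  (posOrient u v w ∧ posOrient u w z) ∨ (posOrient z w v ∧ posOrient z v u)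

/-- Two hyperbolic elements `a, b` are *in the same direction*: their repelling/attracting
fixed points on the boundary circle (identified with the eigenlines of the corresponding
eigenvectors) are cyclically ordered as `(x_a⁻, x_a⁺, x_b⁺, x_b⁻)`. -/
def SameDirection (a b : SL(2, ℝ)) : Prop :=
  ∃ (uaP uaM ubP ubM : Fin 2 → ℝ) (αa βa αb βb : ℝ),
    uaP ≠ 0 ∧ uaM ≠ 0 ∧ ubP ≠ 0 ∧ ubM ≠ 0 ∧
    (a : Matrix (Fin 2) (Fin 2) ℝ) *ᵥ uaP = αa • uaP ∧ 1 < |αa| ∧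
    (a : Matrix (Fin 2) (Fin 2) ℝ) *ᵥ uaM = βa • uaM ∧ |βa| < 1 ∧
    (b : Matrix (Fin 2) (Fin 2) ℝ) *ᵥ ubP = αb • ubP ∧ 1 < |αb| ∧
    (b : Matrix (Fin 2) (Fin 2) ℝ) *ᵥ ubM = βb • ubM ∧ |βb| < 1 ∧
    cyc4 uaM uaP ubP ubM

/-!
For `g = [[A, B], [C, D]]` in `SL(2, ℝ)` and `z ∈ ℍ` one computes
`cosh d(g z, z) = (tr g)² / 2 - 1 + (F_g(z) / Im z)² / 2` with `F_g(z) = C |z|² + (D - A) Re z - B`.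
So whenever `F_g` vanishes somewhere, the displacement is minimal exactly on the geodesic
`F_g = 0`, which is therefore the axis, and `cosh τ_g = (tr g)² / 2 - 1`.

For the given pair the axes are the semicircles `3 |z|² = 1` and
`e⁻ˢ |z|² + 2 (eˢ - e⁻ˢ) Re z = 3 eˢ`; on the first one the second equation forces `Re z > 1`,
so they are disjoint. They contain `i / √3` and `(3 + i √3) / 2`, at distance `arcosh (10 / 3) ≤ 3`.
Finally `cosh τ_a = 7` gives `τ_a ≤ 5`, while `tr b = 4 cosh s` gives
`cosh τ_b = 8 cosh² s - 1 ≥ cosh 2s`, i.e. `τ_b ≥ 2s ≥ 20`.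
-/

def axisForm (g : SL(2, ℝ)) (z : ℍ) : ℝ :=
  g 1 0 * (z.re ^ 2 + z.im ^ 2) + (g 1 1 - g 0 0) * z.re - g 0 1

lemma axisForm_of_eq {g : SL(2, ℝ)} {A B C D : ℝ}
    (hg : (g : Matrix (Fin 2) (Fin 2) ℝ) = !![A, B; C, D]) (z : ℍ) :
    axisForm g z = C * (z.re ^ 2 + z.im ^ 2) + (D - A) * z.re - B := by
  simp [axisForm, hg]

lemma cosh_dist_smul_self (g : SL(2, ℝ)) (z : ℍ) :
    Real.cosh (dist (g • z) z) =
      (g : Matrix (Fin 2) (Fin 2) ℝ).trace ^ 2 / 2 - 1 + (axisForm g z / z.im) ^ 2 / 2 := by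
  set A := g 0 0
  set B := g 0 1
  set C := g 1 0
  set D := g 1 1
  have hdet : A * D - B * C = 1 := by
    have h := g.det_coe
    rwa [Matrix.det_fin_two] at h
  have htr : (g : Matrix (Fin 2) (Fin 2) ℝ).trace = A + D := Matrix.trace_fin_two _
  have hden : (C : ℂ) * z + D ≠ 0 := by
    have h := denom_ne_zero (Matrix.SpecialLinearGroup.toGL g) z
    rw [denom] at h
    simpa using h
  have hN : 0 < Complex.normSq ((C : ℂ) * z + D) := Complex.normSq_pos.mpr hden
  have hgz : ((g • z : ℍ) : ℂ) = (A * z + B) / (C * z + D) := by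
    simp [coe_specialLinearGroup_apply, A, B, C, D]
  have him : (g • z).im = z.im / Complex.normSq (C * z + D) := by
    rw [← coe_im, hgz, Complex.div_im, div_sub_div_same]
    simp only [Complex.normSq_apply, Complex.add_re, Complex.add_im, Complex.mul_re,
      Complex.mul_im, Complex.ofReal_re, Complex.ofReal_im, coe_re, coe_im]
    congr 1
    linear_combination z.im * hdet
  have hsub : ((g • z : ℍ) : ℂ) - z = (-C * z ^ 2 + (A - D) * z + B) / (C * z + D) := by
    rw [hgz, eq_div_iff hden, sub_mul, div_mul_cancel₀ _ hden]
    ring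
  have hnum : Complex.normSq (-C * z ^ 2 + (A - D) * z + B) =
      axisForm g z ^ 2 + ((A + D) ^ 2 - 4) * z.im ^ 2 := by
    simp only [axisForm, Complex.normSq_apply, Complex.add_re, Complex.add_im, Complex.mul_re,
      Complex.mul_im, Complex.sub_re, Complex.sub_im, Complex.ofReal_re, Complex.ofReal_im,
      Complex.neg_re, Complex.neg_im, coe_re, coe_im, pow_two]
    linear_combination (-4 * z.im * z.im) * hdet
  have hy : 0 < z.im := z.im_pos
  rw [cosh_dist, Complex.dist_eq, Complex.sq_norm, hsub, Complex.normSq_div, hnum, him, htr]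
  field_simp
  ring

lemma dist_smul_self_le_iff (g : SL(2, ℝ)) (z w : ℍ) :
    dist (g • z) z ≤ dist (g • w) w ↔ (axisForm g z / z.im) ^ 2 ≤ (axisForm g w / w.im) ^ 2 := by
  rw [← abs_of_nonneg (dist_nonneg (x := g • z)), ← abs_of_nonneg (dist_nonneg (x := g • w)),
    ← Real.cosh_le_cosh, cosh_dist_smul_self, cosh_dist_smul_self, add_le_add_iff_left,
    div_le_div_iff_of_pos_right two_pos]

lemma transLen_nonneg (g : SL(2, ℝ)) : 0 ≤ transLen g :=
  Real.iInf_nonneg fun _ => dist_nonneg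

lemma transLen_le_dist_smul_self (g : SL(2, ℝ)) (z : ℍ) : transLen g ≤ dist (g • z) z :=
  ciInf_le ⟨0, by rintro _ ⟨w, rfl⟩; exact dist_nonneg⟩ z

section Axis

variable {g : SL(2, ℝ)} {z₀ : ℍ}

lemma transLen_eq_dist_of_axisForm_eq_zero (h₀ : axisForm g z₀ = 0) :
    transLen g = dist (g • z₀) z₀ :=
  (transLen_le_dist_smul_self g z₀).antisymm <| le_ciInf fun z =>
    (dist_smul_self_le_iff g z₀ z).2 (by rw [h₀, zero_div, zero_pow two_ne_zero]; positivity)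

lemma cosh_transLen_of_axisForm_eq_zero (h₀ : axisForm g z₀ = 0) :
    Real.cosh (transLen g) = (g : Matrix (Fin 2) (Fin 2) ℝ).trace ^ 2 / 2 - 1 := by
  rw [transLen_eq_dist_of_axisForm_eq_zero h₀, cosh_dist_smul_self, h₀]
  simp

lemma axisSet_eq_of_axisForm_eq_zero (h₀ : axisForm g z₀ = 0) :
    axisSet g = {z | axisForm g z = 0} := by
  ext z
  rw [axisSet, Set.mem_ofPred_eq, Set.mem_ofPred_eq,
    ← (transLen_le_dist_smul_self g z).ge_iff_eq', transLen_eq_dist_of_axisForm_eq_zero h₀,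
    dist_smul_self_le_iff, h₀, zero_div]
  simp [z.im_ne_zero]

lemma mem_axisSet_of_axisForm_eq_zero (h₀ : axisForm g z₀ = 0) : z₀ ∈ axisSet g := by
  rw [axisSet_eq_of_axisForm_eq_zero h₀]
  exact h₀

end Axis

lemma axisDist_le_dist {a b : SL(2, ℝ)} {x y : ℍ} (hx : x ∈ axisSet a) (hy : y ∈ axisSet b) :
    axisDist a b ≤ dist x y := by
  have hx' : axisDist a b ≤ ⨅ y' : axisSet b, dist x (y' : ℍ) :=
    ciInf_le ⟨0, by rintro _ ⟨x', rfl⟩; exact Real.iInf_nonneg fun _ => dist_nonneg⟩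
      (⟨x, hx⟩ : axisSet a)
  exact hx'.trans (ciInf_le ⟨0, by rintro _ ⟨y', rfl⟩; exact dist_nonneg⟩ (⟨y, hy⟩ : axisSet b))

lemma quadratic_le_two_mul_cosh {x : ℝ} (hx : 0 ≤ x) : 1 + x + x ^ 2 / 2 ≤ 2 * Real.cosh x := by
  rw [Real.cosh_eq]
  linarith [Real.quadratic_le_exp_of_nonneg hx, Real.exp_pos (-x)]

lemma le_of_cosh_le_cosh {x y : ℝ} (hx : 0 ≤ x) (hy : 0 ≤ y) (h : Real.cosh x ≤ Real.cosh y) :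
    x ≤ y := by
  simpa [abs_of_nonneg hx, abs_of_nonneg hy] using Real.cosh_le_cosh.1 h

namespace ExplicitPair

def matA : Matrix (Fin 2) (Fin 2) ℝ := !![2, 1; 3, 2]

noncomputable def matB (s : ℝ) : Matrix (Fin 2) (Fin 2) ℝ :=
  !![2 * Real.exp (-s), 3 * Real.exp s; Real.exp (-s), 2 * Real.exp s]

noncomputable def pointA : ℍ := ⟨⟨0, (√3)⁻¹⟩, by simp⟩

noncomputable def pointB : ℍ := ⟨⟨3 / 2, √3 / 2⟩, by simp⟩

@[simp] lemma pointA_re : pointA.re = 0 := rfl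
@[simp] lemma pointA_im : pointA.im = (√3)⁻¹ := rfl
@[simp] lemma pointB_re : pointB.re = 3 / 2 := rfl
@[simp] lemma pointB_im : pointB.im = √3 / 2 := rfl

lemma dist_pointA_pointB_le : dist pointA pointB ≤ 3 := by
  have hcosh : Real.cosh (dist pointA pointB) = 10 / 3 := by
    have h3 : √3 ^ 2 = 3 := Real.sq_sqrt (by norm_num)
    rw [cosh_dist', pointA_re, pointA_im, pointB_re, pointB_im]
    field_simp
    rw [show √3 ^ 4 = (√3 ^ 2) ^ 2 by ring, h3]
    norm_num
  refine le_of_cosh_le_cosh dist_nonneg (by norm_num) ?_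
  linarith [quadratic_le_two_mul_cosh (x := 3) (by norm_num)]

variable {s : ℝ} {a b : SL(2, ℝ)}

lemma axisForm_pointA (hA : (a : Matrix (Fin 2) (Fin 2) ℝ) = matA) : axisForm a pointA = 0 := by
  rw [axisForm_of_eq hA, pointA_re, pointA_im, inv_pow, Real.sq_sqrt (by norm_num)]
  norm_num

lemma axisForm_pointB (hB : (b : Matrix (Fin 2) (Fin 2) ℝ) = matB s) : axisForm b pointB = 0 := by
  rw [axisForm_of_eq hB, pointB_re, pointB_im, div_pow √3, Real.sq_sqrt (by norm_num)]
  ring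

lemma trace_a (hA : (a : Matrix (Fin 2) (Fin 2) ℝ) = matA) :
    (a : Matrix (Fin 2) (Fin 2) ℝ).trace = 4 := by
  rw [hA, matA, Matrix.trace_fin_two_of]
  norm_num

lemma trace_b (hB : (b : Matrix (Fin 2) (Fin 2) ℝ) = matB s) :
    (b : Matrix (Fin 2) (Fin 2) ℝ).trace = 4 * Real.cosh s := by
  rw [hB, matB, Matrix.trace_fin_two_of, Real.cosh_eq]
  ring

lemma isHyperbolic_a (hA : (a : Matrix (Fin 2) (Fin 2) ℝ) = matA) : IsHyperbolic a := by
  unfold _root_.IsHyperbolic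
  rw [trace_a hA]
  norm_num

lemma isHyperbolic_b (hB : (b : Matrix (Fin 2) (Fin 2) ℝ) = matB s) : IsHyperbolic b := by
  unfold _root_.IsHyperbolic
  rw [trace_b hB, abs_of_pos (by positivity)]
  linarith [Real.one_le_cosh s]

lemma transLen_a_le (hA : (a : Matrix (Fin 2) (Fin 2) ℝ) = matA) : transLen a ≤ 5 := by
  have hcosh : Real.cosh (transLen a) = 7 := by
    rw [cosh_transLen_of_axisForm_eq_zero (axisForm_pointA hA), trace_a hA]
    norm_num
  refine le_of_cosh_le_cosh (transLen_nonneg a) (by norm_num) ?_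
  linarith [quadratic_le_two_mul_cosh (x := 5) (by norm_num)]

lemma two_mul_le_transLen_b (hB : (b : Matrix (Fin 2) (Fin 2) ℝ) = matB s) :
    2 * s ≤ transLen b := by
  have hcosh : Real.cosh (2 * s) ≤ Real.cosh (transLen b) := by
    rw [cosh_transLen_of_axisForm_eq_zero (axisForm_pointB hB), trace_b hB,
      Real.cosh_two_mul]
    nlinarith [Real.cosh_sq s, sq_nonneg (Real.sinh s)]
  calc 2 * s ≤ |2 * s| := le_abs_self _
    _ ≤ |transLen b| := Real.cosh_le_cosh.1 hcosh
    _ = transLen b := abs_of_nonneg (transLen_nonneg b)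

lemma axisSet_a_inter_axisSet_b (hs : 0 < s) (hA : (a : Matrix (Fin 2) (Fin 2) ℝ) = matA)
    (hB : (b : Matrix (Fin 2) (Fin 2) ℝ) = matB s) : axisSet a ∩ axisSet b = ∅ := by
  rw [axisSet_eq_of_axisForm_eq_zero (axisForm_pointA hA),
    axisSet_eq_of_axisForm_eq_zero (axisForm_pointB hB), Set.eq_empty_iff_forall_notMem]
  rintro z ⟨hza, hzb⟩
  simp only [Set.mem_ofPred_eq, axisForm_of_eq hA, axisForm_of_eq hB] at hza hzb
  have hnorm : z.re ^ 2 + z.im ^ 2 = 1 / 3 := by linarith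
  have hre : z.re < 1 := by nlinarith [z.im_pos]
  have hexp : Real.exp (-s) < Real.exp s := Real.exp_lt_exp.2 (by linarith)
  rw [hnorm] at hzb
  nlinarith [Real.exp_pos (-s), mul_pos (sub_pos.2 hexp) (sub_pos.2 hre)]

end ExplicitPair

open ExplicitPair

/-- For `s ≥ 10`, the matrices `a = [[2,1],[3,2]]` and `b = [[2e⁻ˢ,3eˢ],[e⁻ˢ,2eˢ]]` are
hyperbolic elements of `SL(2,ℝ)` with disjoint translation axes, and
`τ_b − τ_a ≥ 2d + 1` where `d` is the distance between the axes. -/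
theorem explicit_pair_properties (s : ℝ) (hs : 10 ≤ s) (a b : SL(2, ℝ))
    (hA : (a : Matrix (Fin 2) (Fin 2) ℝ) = !![2, 1; 3, 2])
    (hB : (b : Matrix (Fin 2) (Fin 2) ℝ) =
      !![2 * Real.exp (-s), 3 * Real.exp s; Real.exp (-s), 2 * Real.exp s]) :
    IsHyperbolic a ∧ IsHyperbolic b ∧ axisSet a ∩ axisSet b = ∅ ∧
      2 * axisDist a b + 1 ≤ transLen b - transLen a := by
  have hd : axisDist a b ≤ 3 :=
    (axisDist_le_dist (mem_axisSet_of_axisForm_eq_zero (axisForm_pointA hA))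
      (mem_axisSet_of_axisForm_eq_zero (axisForm_pointB hB))).trans dist_pointA_pointB_le
  refine ⟨isHyperbolic_a hA, isHyperbolic_b hB, axisSet_a_inter_axisSet_b (by linarith) hA hB, ?_⟩
  linarith [transLen_a_le hA, two_mul_le_transLen_b hB]
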